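/- arXiv:1910.01368 — 5 statements merged into one kernel-verified Lean document; each statement's English description precedes it below -/
import Mathlib

section
/- Let p, q > 0 be coprime integers. In the ring M(p,q), the residue class of X − 1 is a unit, and the residue class of X^q − 1 is a unit. -/
/-!
Let `x` be the class of `X`. Since `1 + x + ⋯ + x^{p-1} = 0`, multiplying by `x - 1` gives
`x^p = 1`, and reducing modulo `x - 1` gives `x - 1 ∣ p`; as `p` is invertible in `ℤ/qℤ`, the
element `x - 1` is a unit. Coprimality also makes `x` a power of `x^q`, so `x^q - 1 ∣ x - 1`.
-/

/-- The ring `M(p,q) = (ℤ/qℤ)[X] / (1 + X + ⋯ + X^{p-1})`. -/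
abbrev Mpq (p q : ℕ) : Type :=
  Polynomial (ZMod q) ⧸
    Ideal.span {∑ i ∈ Finset.range p, (Polynomial.X : Polynomial (ZMod q)) ^ i}

open Finset Polynomial

section CommRing

variable {R : Type*} [CommRing R] {x : R} {n : ℕ}

theorem sub_one_dvd_geom_sum_sub_natCast (x : R) (n : ℕ) :
    x - 1 ∣ ∑ i ∈ range n, x ^ i - n := by
  have hsum : ∑ i ∈ range n, x ^ i - n = ∑ i ∈ range n, (x ^ i - 1) := by
    simp [sum_sub_distrib]
  rw [hsum]
  exact dvd_sum fun i _ => by simpa using sub_dvd_pow_sub_pow x 1 i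

theorem pow_eq_one_of_geom_sum_eq_zero (h : ∑ i ∈ range n, x ^ i = 0) : x ^ n = 1 := by
  rw [← sub_eq_zero, ← geom_sum_mul, h, zero_mul]

theorem isUnit_sub_one_of_geom_sum_eq_zero (h : ∑ i ∈ range n, x ^ i = 0)
    (hn : IsUnit (n : R)) : IsUnit (x - 1) := by
  have hdvd := sub_one_dvd_geom_sum_sub_natCast x n
  rw [h, zero_sub, dvd_neg] at hdvd
  exact isUnit_of_dvd_unit hdvd hn

theorem pow_sub_one_dvd_sub_one_of_coprime {p q : ℕ} (hx : x ^ p = 1) (hpq : p.Coprime q) :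
    x ^ q - 1 ∣ x - 1 := by
  have hcop : q.Coprime (orderOf x) := (hpq.coprime_dvd_left (orderOf_dvd_of_pow_eq_one hx)).symm
  obtain ⟨m, hm⟩ := exists_pow_eq_self_of_coprime hcop
  simpa [hm] using sub_dvd_pow_sub_pow (x ^ q) 1 m

end CommRing

theorem isUnit_X_sub_one_and_X_pow_q_sub_one_general (p q : ℕ)
    (hpq : Nat.Coprime p q) :
    IsUnit (Ideal.Quotient.mk
        (Ideal.span {∑ i ∈ Finset.range p, (Polynomial.X : Polynomial (ZMod q)) ^ i})
        (Polynomial.X - 1)) ∧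
    IsUnit (Ideal.Quotient.mk
        (Ideal.span {∑ i ∈ Finset.range p, (Polynomial.X : Polynomial (ZMod q)) ^ i})
        (Polynomial.X ^ q - 1)) := by
  set x : Mpq p q := Ideal.Quotient.mk _ X
  have hgeom : ∑ i ∈ range p, x ^ i = 0 := by
    simpa [x] using Ideal.Quotient.mk_singleton_self (∑ i ∈ range p, (X : (ZMod q)[X]) ^ i)
  have hp_unit : IsUnit (p : Mpq p q) := by
    simpa using ((ZMod.isUnit_iff_coprime p q).2 hpq).map (algebraMap (ZMod q) (Mpq p q))
  have hx_sub_one : IsUnit (x - 1) := isUnit_sub_one_of_geom_sum_eq_zero hgeom hp_unit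
  have hdvd : x ^ q - 1 ∣ x - 1 :=
    pow_sub_one_dvd_sub_one_of_coprime (pow_eq_one_of_geom_sum_eq_zero hgeom) hpq
  simpa [x] using And.intro hx_sub_one (isUnit_of_dvd_unit hdvd hx_sub_one)

/-- If `gcd(p,q) = 1`, then the classes of `X - 1` and of `X^q - 1` are units in `M(p,q)`. -/
theorem isUnit_X_sub_one_and_X_pow_q_sub_one (p q : ℕ) (hp : 0 < p) (hq : 0 < q)
    (hpq : Nat.Coprime p q) :
    IsUnit (Ideal.Quotient.mk
        (Ideal.span {∑ i ∈ Finset.range p, (Polynomial.X : Polynomial (ZMod q)) ^ i})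
        (Polynomial.X - 1)) ∧
    IsUnit (Ideal.Quotient.mk
        (Ideal.span {∑ i ∈ Finset.range p, (Polynomial.X : Polynomial (ZMod q)) ^ i})
        (Polynomial.X ^ q - 1)) :=
  isUnit_X_sub_one_and_X_pow_q_sub_one_general p q hpq
end

section
/- Let p, q > 0 be coprime integers. Then det( Σ_{j=0}^{p−1} A_p^{jq} ) = (1 − t^q)^{p−1} in ℂ[t], where A_p^0 = I. -/
/-- The `p × p` matrix `A_p` over `ℂ[t]` with `(i, i+1)` entries equal to `1` for
`0 ≤ i ≤ p-2`, `(p-1, 0)` entry equal to `t`, and all other entries `0`. -/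
noncomputable def Ap (p : ℕ) : Matrix (Fin p) (Fin p) (Polynomial ℂ) :=
  Matrix.of fun i j =>
    if (i : ℕ) + 1 = (j : ℕ) then 1
    else if (i : ℕ) = p - 1 ∧ (j : ℕ) = 0 then Polynomial.X
    else 0

/-!
`A_p` is `diag(1, …, 1, t)` times the permutation matrix of the rotation `i ↦ i + 1` of `Fin p`,
so `C = A_p ^ q` is a diagonal matrix times the permutation matrix of the rotation by `q`, which is
again a single `p`-cycle because `gcd(p, q) = 1`, and the diagonal entries of `C` multiply to
`t ^ q`. A diagonal matrix with entry product `c` times the permutation matrix of a full cycle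
satisfies `C ^ p = c • 1`, and `det (1 - C) = 1 - c` because only the identity and the cycle
itself contribute to the Leibniz expansion. Hence `det (∑_{j<p} C ^ j) · (1 - t ^ q) =
det (1 - C ^ p) = (1 - t ^ q) ^ p`, and `1 - t ^ q` cancels.
-/

open Equiv Finset Matrix Polynomial

namespace Equiv.Perm

variable {α : Type*} {σ τ : Perm α}

theorem IsCycleOn.pow_of_coprime {s : Finset α} (hσ : σ.IsCycleOn s) {k : ℕ}
    (hk : k.Coprime #s) : (σ ^ k).IsCycleOn s := by
  refine ⟨hσ.1.perm_pow k, fun x hx y hy => ?_⟩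
  obtain ⟨r, -, rfl⟩ := hσ.exists_pow_eq hx hy
  obtain ⟨m, -, hm⟩ := Nat.exists_mul_mod_eq_of_coprime r hk (card_ne_zero_of_mem hx)
  exact ⟨m, by rw [zpow_natCast, ← pow_mul, hσ.pow_apply_eq_pow_apply hx]; exact hm⟩

theorem IsCycleOn.prod_range_card_pow_apply {M : Type*} [CommMonoid M] {s : Finset α}
    (hσ : σ.IsCycleOn s) {a : α} (ha : a ∈ s) (f : α → M) :
    ∏ m ∈ range #s, f ((σ ^ m) a) = ∏ x ∈ s, f x := by
  refine prod_nbij (fun m => (σ ^ m) a) (fun m _ => (hσ.1.perm_pow m).mapsTo ha)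
    (fun m hm m' hm' h => ?_) (fun y hy => ?_) fun _ _ => rfl
  · exact ((hσ.pow_apply_eq_pow_apply ha).1 h).eq_of_lt_of_lt (mem_range.1 hm) (mem_range.1 hm')
  · obtain ⟨m, hm, rfl⟩ := hσ.exists_pow_eq ha hy
    exact ⟨m, mem_range.2 hm, rfl⟩

theorem IsCycleOn.eq_of_forall_apply_eq_or [Finite α] (hσ : σ.IsCycleOn .univ)
    (h : ∀ i, τ i = i ∨ τ i = σ i) (hτ : τ ≠ 1) : τ = σ := by
  obtain ⟨a, ha⟩ : ∃ a, τ a ≠ a := by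
    by_contra! h'
    exact hτ (Equiv.ext h')
  -- the points moved by `τ` form a `τ`-invariant set on which `τ` agrees with `σ`
  have moved : ∀ k : ℕ, τ ((σ ^ k) a) ≠ (σ ^ k) a := by
    intro k
    induction k with
    | zero => exact ha
    | succ k ih =>
      rw [pow_succ', Perm.mul_apply, ← (h _).resolve_left ih]
      exact fun h' => ih (τ.injective h')
  ext j
  obtain ⟨k, rfl⟩ := hσ.exists_pow_eq' Set.finite_univ (Set.mem_univ a) (Set.mem_univ j)
  exact (h _).resolve_left (moved k)

theorem prod_prod_range_pow_apply {M : Type*} [Fintype α] [CommMonoid M]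
    (σ : Perm α) (f : α → M) (k : ℕ) :
    ∏ i, ∏ m ∈ range k, f ((σ ^ m) i) = (∏ i, f i) ^ k := by
  rw [prod_comm]
  calc ∏ m ∈ range k, ∏ i, f ((σ ^ m) i) = ∏ _m ∈ range k, ∏ i, f i :=
        prod_congr rfl fun m _ => Equiv.prod_comp (σ ^ m) f
    _ = (∏ i, f i) ^ k := by rw [prod_const, card_range]

end Equiv.Perm

namespace Matrix

variable {n R : Type*} [Fintype n] [DecidableEq n]

section CommSemiring

variable [CommSemiring R] (σ : Perm n) (w : n → R)

theorem permMatrix_mul_diagonal :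
    σ.permMatrix R * diagonal w = diagonal (w ∘ σ) * σ.permMatrix R := by
  ext i j
  by_cases h : σ i = j
  · subst h; simp [mul_comm]
  · simp [PEquiv.toMatrix_apply, h]

theorem diagonal_mul_permMatrix_pow (k : ℕ) :
    (diagonal w * σ.permMatrix R) ^ k =
      diagonal (fun i => ∏ m ∈ range k, w ((σ ^ m) i)) * (σ ^ k).permMatrix R := by
  induction k with
  | zero => simp
  | succ k ih =>
    rw [pow_succ, ih, mul_assoc, ← mul_assoc (Perm.permMatrix R _), permMatrix_mul_diagonal,
      mul_assoc, ← permMatrix_mul, ← pow_succ', ← mul_assoc, diagonal_mul_diagonal]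
    simp [prod_range_succ]

theorem diagonal_mul_permMatrix_pow_card (hσ : σ.IsCycleOn .univ) :
    (diagonal w * σ.permMatrix R) ^ Fintype.card n = diagonal fun _ => ∏ i, w i := by
  have hσ' : σ.IsCycleOn (univ : Finset n) := by rwa [coe_univ]
  have hpow : σ ^ Fintype.card n = 1 := Equiv.ext fun a => hσ'.pow_card_apply (mem_univ a)
  rw [diagonal_mul_permMatrix_pow, hpow, permMatrix_one, mul_one]
  exact congrArg diagonal (funext fun a => hσ'.prod_range_card_pow_apply (mem_univ a) w)

end CommSemiring

variable [CommRing R] (σ : Perm n) (w : n → R)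

theorem det_one_sub_diagonal_mul_permMatrix [Nonempty n] (hσ : σ.IsCycleOn .univ) :
    det (1 - diagonal w * σ.permMatrix R) = 1 - ∏ i, w i := by
  rcases subsingleton_or_nontrivial n with hn | hn
  · have : Unique n := uniqueOfSubsingleton (Classical.arbitrary n)
    simp [det_unique, Subsingleton.elim (σ default) default]
  have hmove : ∀ i, σ i ≠ i := fun i => hσ.apply_ne Set.nontrivial_univ (Set.mem_univ i)
  have hsupp : σ.support = univ := eq_univ_of_forall fun i => Perm.mem_support.2 (hmove i)
  have hcyc : σ.IsCycle :=
    Perm.isCycle_iff_exists_isCycleOn.2 ⟨.univ, Set.nontrivial_univ, hσ, fun _ _ => trivial⟩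
  have hentry : ∀ i j, (1 - diagonal w * σ.permMatrix R) i j =
      (if i = j then 1 else 0) - if σ i = j then w i else 0 := by
    intro i j
    simp [one_apply, PEquiv.toMatrix_apply]
  rw [← det_transpose, det_apply, Fintype.sum_eq_add 1 σ (Ne.symm hcyc.ne_one)]
  · have hmove' : ∀ i, i ≠ σ i := fun i => (hmove i).symm
    simp only [transpose_apply, hentry, Perm.one_apply, if_true, hmove, hmove', if_false,
      sub_zero, zero_sub, prod_const_one, Perm.sign_one, one_smul, prod_neg, hcyc.sign, hsupp,
      card_univ, Units.smul_def, zsmul_eq_mul]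
    push_cast
    rw [← mul_assoc, neg_mul, ← mul_pow, neg_one_mul, neg_neg, one_pow, neg_one_mul,
      sub_eq_add_neg]
  · rintro τ ⟨hτ1, hτσ⟩
    obtain ⟨i, hi⟩ : ∃ i, ¬ (τ i = i ∨ τ i = σ i) := by
      by_contra! h
      exact hτσ (hσ.eq_of_forall_apply_eq_or h hτ1)
    rw [not_or] at hi
    rw [prod_eq_zero (mem_univ i), smul_zero]
    simp [transpose_apply, hentry, Ne.symm hi.1, Ne.symm hi.2]

end Matrix

theorem isCycleOn_finRotate (n : ℕ) : (finRotate (n + 1)).IsCycleOn .univ := by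
  rcases n with _ | n
  · exact Perm.isCycleOn_of_subsingleton (α := Fin 1) _ _
  · convert isCycle_finRotate.isCycleOn
    simp

theorem Ap_succ_eq_diagonal_mul_permMatrix (n : ℕ) :
    Ap (n + 1) =
      diagonal (Pi.mulSingle (Fin.last n) (X : ℂ[X])) * (finRotate (n + 1)).permMatrix ℂ[X] := by
  ext i j : 1
  simp only [Ap, of_apply, diagonal_mul, Perm.permMatrix, PEquiv.toMatrix_apply, toPEquiv_apply,
    Option.mem_def, Option.some_inj, Fin.ext_iff, coe_finRotate, Pi.mulSingle_apply,
    Fin.val_last, Nat.add_sub_cancel]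
  split_ifs <;> simp <;> omega

/-- For coprime `p, q > 0`, `det(Σ_{j=0}^{p-1} A_p^{jq}) = (1 - t^q)^{p-1}` in `ℂ[t]`. -/
theorem det_sum_pow_Ap (p q : ℕ) (hp : 0 < p) (hq : 0 < q) (hpq : Nat.Coprime p q) :
    (∑ j ∈ Finset.range p, (Ap p) ^ (j * q)).det =
      (1 - (Polynomial.X : Polynomial ℂ) ^ q) ^ (p - 1) := by
  obtain ⟨n, rfl⟩ : ∃ n, p = n + 1 := ⟨p - 1, by omega⟩
  set σ := finRotate (n + 1) ^ q
  have hσ : σ.IsCycleOn .univ := by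
    have h := isCycleOn_finRotate n
    rw [← coe_univ] at h ⊢
    exact h.pow_of_coprime (by simpa using hpq.symm)
  obtain ⟨w, hC, hw⟩ : ∃ w, Ap (n + 1) ^ q = diagonal w * σ.permMatrix ℂ[X] ∧ ∏ i, w i = X ^ q :=
    ⟨_, by rw [Ap_succ_eq_diagonal_mul_permMatrix, diagonal_mul_permMatrix_pow],
      by rw [Perm.prod_prod_range_pow_apply, Fintype.prod_pi_mulSingle']⟩
  have hCp : (Ap (n + 1) ^ q) ^ (n + 1) = diagonal fun _ => X ^ q := by
    simpa [hC, hw] using diagonal_mul_permMatrix_pow_card σ w hσ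
  have hdet : det (1 - Ap (n + 1) ^ q) = 1 - X ^ q := by
    rw [hC, det_one_sub_diagonal_mul_permMatrix σ w hσ, hw]
  have hgeom := congrArg det (geom_sum_mul_neg (Ap (n + 1) ^ q) (n + 1))
  rw [det_mul, hdet, hCp, ← diagonal_one, diagonal_sub, det_diagonal, prod_const, card_univ,
    Fintype.card_fin, pow_succ] at hgeom
  have hne : (1 - X ^ q : ℂ[X]) ≠ 0 := fun h => by
    simpa [hq.ne'] using congrArg (eval 0) h
  simp_rw [pow_mul']
  simpa using mul_right_cancel₀ hne hgeom
end

section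
/- Let (V₁, λ₁) and (V₂, λ₂) be nonsingular linking forms on finite abelian groups, and let L ⊆ V₁ × V₂ be a metaboliser of λ₁ ⊕ −λ₂ such that L ∩ (V₁ × 0) = 0 and L ∩ (0 × V₂) = 0. Then there exists an isometry f : (V₁, λ₁) → (V₂, λ₂) whose graph is L, i.e. L = { (v, f(v)) : v ∈ V₁ }. -/
/-- `ℚ/ℤ`, realized as `AddCircle (1 : ℚ)`. -/
abbrev QmodZ : Type := AddCircle (1 : ℚ)

/-!
Since `L` is isotropic, `L ∩ (V₁ × 0) = 0 = L ∩ (0 × V₂)` makes `L` the graph of an injective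
partial map in both directions, so it suffices that both projections of `L` are onto. If the
first one were not, some character of `V₁` would vanish on `pr₁ L` without being zero
(`ℚ/ℤ` is injective). By nonsingularity it is `λ₁(x, -)`, and then `(x, 0) ∈ L^⊥ = L`,
forcing `x = 0`, a contradiction. Isometry is isotropy of `L` read on the graph.
-/

lemma apply_zero_left_of_add_left {V M : Type*} [AddGroup V] [AddGroup M] (b : V → V → M)
    (hadd : ∀ x y z, b (x + y) z = b x z + b y z) (y : V) : b 0 y = 0 :=
  map_zero (AddMonoidHom.mk' (b · y) (hadd · · y))

namespace AddSubgroup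

lemma eq_top_of_forall_character_eq_zero {V : Type*} [AddCommGroup V] (D : AddSubgroup V)
    (hD : ∀ g : V →+ QmodZ, (∀ d ∈ D, g d = 0) → g = 0) : D = ⊤ := by
  refine eq_top_iff' D |>.2 fun v => ?_
  rw [← QuotientAddGroup.eq_zero_iff]
  refine CharacterModule.eq_zero_of_character_apply fun c => ?_
  have hc : (show V ⧸ D →+ QmodZ from c).comp (QuotientAddGroup.mk' D) = 0 :=
    hD _ fun d hd => show c (QuotientAddGroup.mk' D d) = 0 by
      rw [QuotientAddGroup.mk'_apply, (QuotientAddGroup.eq_zero_iff d).2 hd, map_zero]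
  exact DFunLike.congr_fun hc v

lemma eq_top_of_orthogonal_eq_bot {V : Type*} [AddCommGroup V] (b : V → V → QmodZ)
    (hadd : ∀ x y z, b (x + y) z = b x z + b y z)
    (hsurj : ∀ g : V →+ QmodZ, ∃ x, ∀ y, b x y = g y)
    (D : AddSubgroup V) (hD : ∀ x, (∀ d ∈ D, b x d = 0) → x = 0) : D = ⊤ := by
  refine eq_top_of_forall_character_eq_zero D fun g hg => ?_
  obtain ⟨x, hx⟩ := hsurj g
  have hx0 : x = 0 := hD x fun d hd => (hx d).trans (hg d hd)
  ext y
  rw [← hx, hx0, apply_zero_left_of_add_left b hadd, AddMonoidHom.zero_apply]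

variable {G H : Type*} [AddGroup G] [AddGroup H]

lemma exists_addEquiv_mem_iff_snd_eq (L : AddSubgroup (G × H))
    (hfst : L.map (AddMonoidHom.fst G H) = ⊤) (hsnd : L.map (AddMonoidHom.snd G H) = ⊤)
    (hL₁ : ∀ x : G, (x, (0 : H)) ∈ L → x = 0) (hL₂ : ∀ y : H, ((0 : G), y) ∈ L → y = 0) :
    ∃ e : G ≃+ H, ∀ z : G × H, z ∈ L ↔ z.2 = e z.1 := by
  have hinj₁ : Function.Injective ((AddMonoidHom.fst G H).domRestrict L) := by
    refine (injective_iff_map_eq_zero _).2 ?_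
    rintro ⟨⟨x, y⟩, hz⟩ (rfl : x = 0)
    simp [hL₂ y hz]
  have hinj₂ : Function.Injective ((AddMonoidHom.snd G H).domRestrict L) := by
    refine (injective_iff_map_eq_zero _).2 ?_
    rintro ⟨⟨x, y⟩, hz⟩ (rfl : y = 0)
    simp [hL₁ x hz]
  let e₁ : L ≃+ G := AddEquiv.ofBijective _
    ⟨hinj₁, AddMonoidHom.range_eq_top.1 ((AddMonoidHom.domRestrict_range _ _).trans hfst)⟩
  let e₂ : L ≃+ H := AddEquiv.ofBijective _
    ⟨hinj₂, AddMonoidHom.range_eq_top.1 ((AddMonoidHom.domRestrict_range _ _).trans hsnd)⟩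
  refine ⟨e₁.symm.trans e₂, fun z => ⟨fun hz => ?_, fun hz => ?_⟩⟩
  · have : e₁.symm z.1 = ⟨z, hz⟩ := e₁.symm_apply_eq.2 rfl
    simp only [AddEquiv.trans_apply, this]
    rfl
  · have hz₁ : (e₁.symm z.1 : G × H).1 = z.1 := e₁.apply_symm_apply z.1
    have hz' : z = e₁.symm z.1 := Prod.ext hz₁.symm hz
    exact hz' ▸ (e₁.symm z.1).2

end AddSubgroup

open AddSubgroup in
theorem metaboliser_is_graph_general {V₁ V₂ : Type} [AddCommGroup V₁] [AddCommGroup V₂]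
    (l₁ : V₁ → V₁ → QmodZ) (l₂ : V₂ → V₂ → QmodZ)
    -- biadditive and symmetric
    (h₁add : ∀ x y z : V₁, l₁ (x + y) z = l₁ x z + l₁ y z)
    (h₂add : ∀ x y z : V₂, l₂ (x + y) z = l₂ x z + l₂ y z)
    -- nonsingular: the adjoint map `x ↦ λ(x, -)` is injective and surjective onto
    -- `Hom(V, ℚ/ℤ)`
    (h₁surj : ∀ g : V₁ →+ QmodZ, ∃ x : V₁, ∀ y : V₁, l₁ x y = g y)
    (h₂surj : ∀ g : V₂ →+ QmodZ, ∃ x : V₂, ∀ y : V₂, l₂ x y = g y)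
    -- `L` is a metaboliser of `λ₁ ⊕ -λ₂`
    (L : AddSubgroup (V₁ × V₂))
    (hL : ∀ z : V₁ × V₂, z ∈ L ↔ ∀ w ∈ L, l₁ z.1 w.1 - l₂ z.2 w.2 = 0)
    -- `L ∩ (V₁ × 0) = 0` and `L ∩ (0 × V₂) = 0`
    (hL1 : ∀ v : V₁, (v, (0 : V₂)) ∈ L → v = 0)
    (hL2 : ∀ w : V₂, ((0 : V₁), w) ∈ L → w = 0) :
    ∃ f : V₁ ≃+ V₂, (∀ x y : V₁, l₂ (f x) (f y) = l₁ x y) ∧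
      (∀ z : V₁ × V₂, z ∈ L ↔ z.2 = f z.1) := by
  have hfst : L.map (AddMonoidHom.fst V₁ V₂) = ⊤ := by
    refine eq_top_of_orthogonal_eq_bot l₁ h₁add h₁surj _ fun x hx => hL1 x ?_
    refine (hL _).2 fun w hw => ?_
    simp [hx w.1 (mem_map_of_mem _ hw), apply_zero_left_of_add_left l₂ h₂add]
  have hsnd : L.map (AddMonoidHom.snd V₁ V₂) = ⊤ := by
    refine eq_top_of_orthogonal_eq_bot l₂ h₂add h₂surj _ fun y hy => hL2 y ?_
    refine (hL _).2 fun w hw => ?_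
    simp [hy w.2 (mem_map_of_mem _ hw), apply_zero_left_of_add_left l₁ h₁add]
  obtain ⟨f, hf⟩ := exists_addEquiv_mem_iff_snd_eq L hfst hsnd hL1 hL2
  refine ⟨f, fun x y => ?_, hf⟩
  have hxy := (hL (x, f x)).1 ((hf _).2 rfl) (y, f y) ((hf _).2 rfl)
  exact (sub_eq_zero.1 hxy).symm

/-- Proposition 4.2(1): let `(V₁,λ₁)` and `(V₂,λ₂)` be nonsingular linking forms on finite
abelian groups and let `L ⊆ V₁ × V₂` be a metaboliser of `λ₁ ⊕ -λ₂` with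
`L ∩ (V₁ × 0) = 0 = L ∩ (0 × V₂)`.  Then `L` is the graph of an isometry
`f : (V₁,λ₁) → (V₂,λ₂)`. -/
theorem metaboliser_is_graph {V₁ V₂ : Type} [AddCommGroup V₁] [AddCommGroup V₂]
    [Finite V₁] [Finite V₂]
    (l₁ : V₁ → V₁ → QmodZ) (l₂ : V₂ → V₂ → QmodZ)
    -- biadditive and symmetric
    (h₁add : ∀ x y z : V₁, l₁ (x + y) z = l₁ x z + l₁ y z)
    (h₁symm : ∀ x y : V₁, l₁ x y = l₁ y x)
    (h₂add : ∀ x y z : V₂, l₂ (x + y) z = l₂ x z + l₂ y z)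
    (h₂symm : ∀ x y : V₂, l₂ x y = l₂ y x)
    -- nonsingular: the adjoint map `x ↦ λ(x, -)` is injective and surjective onto
    -- `Hom(V, ℚ/ℤ)`
    (h₁inj : ∀ x : V₁, (∀ y : V₁, l₁ x y = 0) → x = 0)
    (h₁surj : ∀ g : V₁ →+ QmodZ, ∃ x : V₁, ∀ y : V₁, l₁ x y = g y)
    (h₂inj : ∀ x : V₂, (∀ y : V₂, l₂ x y = 0) → x = 0)
    (h₂surj : ∀ g : V₂ →+ QmodZ, ∃ x : V₂, ∀ y : V₂, l₂ x y = g y)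
    -- `L` is a metaboliser of `λ₁ ⊕ -λ₂`
    (L : AddSubgroup (V₁ × V₂))
    (hL : ∀ z : V₁ × V₂, z ∈ L ↔ ∀ w ∈ L, l₁ z.1 w.1 - l₂ z.2 w.2 = 0)
    -- `L ∩ (V₁ × 0) = 0` and `L ∩ (0 × V₂) = 0`
    (hL1 : ∀ v : V₁, (v, (0 : V₂)) ∈ L → v = 0)
    (hL2 : ∀ w : V₂, ((0 : V₁), w) ∈ L → w = 0) :
    ∃ f : V₁ ≃+ V₂, (∀ x y : V₁, l₂ (f x) (f y) = l₁ x y) ∧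
      (∀ z : V₁ × V₂, z ∈ L ↔ z.2 = f z.1) :=
  metaboliser_is_graph_general l₁ l₂ h₁add h₂add h₁surj h₂surj L hL hL1 hL2
end

section
/- Let (V₁, λ₁) and (V₂, λ₂) be nonsingular linking forms over Λ = ℂ[t^{±1}] whose underlying modules V₁ and V₂ have orders with distinct roots (i.e. there is no ω ∈ ℂ such that both V₁ and V₂ contain a nonzero element annihilated by t − ω). If the orthogonal direct sum (V₁ ⊕ V₂, λ₁ ⊕ λ₂) is metabolic, then (V₁, λ₁) and (V₂, λ₂) are both metabolic. -/
/-- The ring `Λ = ℂ[t^{±1}]` of complex Laurent polynomials. -/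
abbrev LC : Type := LaurentPolynomial ℂ

instance : IsDomain LC := NoZeroDivisors.to_isDomain _

/-- The field `ℂ(t)` of fractions of `Λ`. -/
abbrev CtField : Type := FractionRing LC

/-- The copy of `Λ` inside `ℂ(t)`, as a `Λ`-submodule. -/
noncomputable abbrev LCinCt : Submodule LC CtField := Submodule.span LC {(1 : CtField)}

/-- The quotient `Λ`-module `ℂ(t)/Λ`. -/
abbrev QLC : Type := CtField ⧸ LCinCt

/-!
Distinct roots make the annihilators of `V₁` and `V₂` comaximal: over the algebraically closed
field `ℂ`, two annihilating polynomials whose roots are all eigenvalues of `t` have no common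
root, hence are coprime. Writing `1 = a + b` with `a • V₁ = 0` and `b • V₂ = 0`, multiplication
by `b` and by `a` projects `V₁ × V₂` onto its two summands, so every submodule `L` contains the
projections of its elements, and the restrictions of a metaboliser `L` to `V₁` and `V₂` are
metabolisers.
-/

open Polynomial LaurentPolynomial

theorem exists_ne_zero_forall_smul_eq_zero {R M : Type*} [CommRing R] [IsDomain R]
    [AddCommGroup M] [Module R M] [Module.Finite R M]
    (htor : ∀ x : M, ∃ a : R, a ≠ 0 ∧ a • x = 0) :
    ∃ a : R, a ≠ 0 ∧ ∀ x : M, a • x = 0 := by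
  have hM : Module.IsTorsion R M := fun {x} =>
    let ⟨a, ha0, hax⟩ := htor x
    ⟨⟨a, mem_nonZeroDivisors_of_ne_zero ha0⟩, hax⟩
  obtain ⟨a, ha, ha0⟩ := Submodule.annihilator_top_inter_nonZeroDivisors hM
  exact ⟨a, nonZeroDivisors.ne_zero ha0,
    fun x => Submodule.mem_annihilator.mp ha x Submodule.mem_top⟩

section Field

variable {K V : Type*} [Field K] [AddCommGroup V] [Module K[T;T⁻¹] V]

theorem exists_polynomial_annihilator [Module.Finite K[T;T⁻¹] V]
    (htor : ∀ x : V, ∃ a : K[T;T⁻¹], a ≠ 0 ∧ a • x = 0) :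
    ∃ q : K[X], q ≠ 0 ∧ ∀ x : V, toLaurent q • x = 0 := by
  obtain ⟨p, hp0, hp⟩ := exists_ne_zero_forall_smul_eq_zero htor
  obtain ⟨n, q, hq⟩ := exists_T_pow p
  refine ⟨q, ?_, fun x => by rw [hq, mul_comm, mul_smul, hp, smul_zero]⟩
  rintro rfl
  exact mul_ne_zero hp0 (isUnit_T (n : ℤ)).ne_zero (by rw [← hq, map_zero])

/-- An annihilating polynomial of minimal degree has only eigenvalues of `t` as roots: a root `ω`
at which `t - ω` acted injectively could be divided out. -/
theorem exists_polynomial_annihilator_roots_are_eigenvalues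
    (h : ∃ q : K[X], q ≠ 0 ∧ ∀ x : V, toLaurent q • x = 0) :
    ∃ q : K[X], q ≠ 0 ∧ (∀ x : V, toLaurent q • x = 0) ∧
      ∀ ω, q.IsRoot ω → ∃ x : V, x ≠ 0 ∧ (T 1 - LaurentPolynomial.C ω) • x = 0 := by
  classical
  have hex : ∃ n, ∃ q : K[X], q.natDegree = n ∧ q ≠ 0 ∧ ∀ x : V, toLaurent q • x = 0 :=
    let ⟨q, hq⟩ := h
    ⟨_, q, rfl, hq⟩
  obtain ⟨q, hdeg, hq0, hann⟩ := Nat.find_spec hex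
  refine ⟨q, hq0, hann, fun ω hω => ?_⟩
  by_contra! hinj
  set r := q /ₘ (X - Polynomial.C ω)
  have hqr : (X - Polynomial.C ω) * r = q := mul_divByMonic_eq_iff_isRoot.2 hω
  have hr0 : r ≠ 0 := by
    rintro hr
    rw [hr, mul_zero] at hqr
    exact hq0 hqr.symm
  have hrann : ∀ x : V, toLaurent r • x = 0 := fun x => by
    by_contra hx
    refine hinj _ hx ?_
    rw [← mul_smul, ← toLaurent_X, ← toLaurent_C, ← map_sub, ← map_mul, hqr, hann]
  have hrdeg : r.natDegree < q.natDegree := by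
    rw [← hqr, natDegree_mul (X_sub_C_ne_zero ω) hr0, natDegree_X_sub_C]
    omega
  exact Nat.find_min hex (hdeg ▸ hrdeg) ⟨r, rfl, hr0, hrann⟩

end Field

theorem exists_add_eq_one_annihilators_of_distinct_eigenvalues {K V₁ V₂ : Type*} [Field K]
    [IsAlgClosed K] [AddCommGroup V₁] [AddCommGroup V₂] [Module K[T;T⁻¹] V₁]
    [Module K[T;T⁻¹] V₂] [Module.Finite K[T;T⁻¹] V₁] [Module.Finite K[T;T⁻¹] V₂]
    (htor₁ : ∀ x : V₁, ∃ a : K[T;T⁻¹], a ≠ 0 ∧ a • x = 0)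
    (htor₂ : ∀ x : V₂, ∃ a : K[T;T⁻¹], a ≠ 0 ∧ a • x = 0)
    (hroots : ¬ ∃ ω : K,
      (∃ x : V₁, x ≠ 0 ∧ (T 1 - LaurentPolynomial.C ω) • x = 0) ∧
      (∃ y : V₂, y ≠ 0 ∧ (T 1 - LaurentPolynomial.C ω) • y = 0)) :
    ∃ a b : K[T;T⁻¹], a + b = 1 ∧ (∀ x : V₁, a • x = 0) ∧ ∀ y : V₂, b • y = 0 := by
  obtain ⟨q₁, -, hq₁, hroots₁⟩ :=
    exists_polynomial_annihilator_roots_are_eigenvalues (exists_polynomial_annihilator htor₁)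
  obtain ⟨q₂, -, hq₂, hroots₂⟩ :=
    exists_polynomial_annihilator_roots_are_eigenvalues (exists_polynomial_annihilator htor₂)
  have hcop : IsCoprime q₁ q₂ := by
    refine (isCoprime_iff_aeval_ne_zero_of_isAlgClosed K K q₁ q₂).2 fun ω => ?_
    by_contra! h
    exact hroots ⟨ω, hroots₁ ω (by simpa using h.1), hroots₂ ω (by simpa using h.2)⟩
  obtain ⟨u, v, huv⟩ := hcop.map (toLaurent : K[X] →+* K[T;T⁻¹])
  exact ⟨u * toLaurent q₁, v * toLaurent q₂, huv,
    fun x => by rw [mul_smul, hq₁, smul_zero], fun y => by rw [mul_smul, hq₂, smul_zero]⟩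

theorem smul_eq_self_of_add_eq_one {R M : Type*} [Semiring R] [AddCommMonoid M] [Module R M]
    {a b : R} (hab : a + b = 1) {x : M} (hx : a • x = 0) : b • x = x := by
  rw [← zero_add (b • x), ← hx, ← add_smul, hab, one_smul]

section Metaboliser

variable {R V W Q : Type*} [Semiring R] [AddCommMonoid V] [Module R V]
  [AddCommMonoid W] [Module R W] [Zero Q]

variable (R) in
def IsMetaboliser (l : V → V → Q) (L : Submodule R V) : Prop :=
  ∀ x, x ∈ L ↔ ∀ y ∈ L, l x y = 0

theorem IsMetaboliser.comap {B : W → W → Q} {l : V → V → Q} {L : Submodule R W}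
    (hL : IsMetaboliser R B L) (i : V →ₗ[R] W) (p : W → V) (hpi : ∀ x, p (i x) = x)
    (hB : ∀ x w, B (i x) w = l x (p w)) (hLp : ∀ w ∈ L, i (p w) ∈ L) :
    IsMetaboliser R l (L.comap i) := by
  intro x
  refine ⟨fun hx y hy => ?_, fun hx => (hL (i x)).2 fun w hw => ?_⟩
  · rw [← hpi y, ← hB]
    exact (hL (i x)).1 hx (i y) hy
  · rw [hB]
    exact hx (p w) (hLp w hw)

end Metaboliser

theorem metabolic_sum_of_distinct_roots_general {V₁ V₂ : Type}
    [AddCommGroup V₁] [AddCommGroup V₂] [Module LC V₁] [Module LC V₂]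
    -- finitely generated torsion modules
    [Module.Finite LC V₁] [Module.Finite LC V₂]
    (htor₁ : ∀ x : V₁, ∃ a : LC, a ≠ 0 ∧ a • x = 0)
    (htor₂ : ∀ x : V₂, ∃ a : LC, a ≠ 0 ∧ a • x = 0)
    -- the linking forms
    (l₁ : V₁ → V₁ → QLC) (l₂ : V₂ → V₂ → QLC)
    -- biadditive, `Λ`-linear in the first variable, `#`-semilinear in the second variable
    (h₁lin : ∀ (a : LC) (x y : V₁), l₁ (a • x) y = a • l₁ x y)
    (h₂lin : ∀ (a : LC) (x y : V₂), l₂ (a • x) y = a • l₂ x y)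
    -- the orders of `V₁` and `V₂` have distinct roots
    (hroots : ¬ ∃ ω : ℂ,
      (∃ x : V₁, x ≠ 0 ∧ (LaurentPolynomial.T 1 - LaurentPolynomial.C ω) • x = 0) ∧
      (∃ y : V₂, y ≠ 0 ∧ (LaurentPolynomial.T 1 - LaurentPolynomial.C ω) • y = 0))
    -- the orthogonal direct sum `λ₁ ⊕ λ₂` is metabolic
    (hmet : ∃ L : Submodule LC (V₁ × V₂),
      ∀ z : V₁ × V₂, z ∈ L ↔ ∀ w ∈ L, l₁ z.1 w.1 + l₂ z.2 w.2 = 0) :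
    (∃ L₁ : Submodule LC V₁, ∀ x : V₁, x ∈ L₁ ↔ ∀ y ∈ L₁, l₁ x y = 0) ∧
    (∃ L₂ : Submodule LC V₂, ∀ x : V₂, x ∈ L₂ ↔ ∀ y ∈ L₂, l₂ x y = 0) := by
  obtain ⟨L, hL⟩ := hmet
  obtain ⟨a, b, hab, ha, hb⟩ :=
    exists_add_eq_one_annihilators_of_distinct_eigenvalues htor₁ htor₂ hroots
  have hl₁ : ∀ y, l₁ 0 y = 0 := fun y => by simpa using h₁lin 0 0 y
  have hl₂ : ∀ y, l₂ 0 y = 0 := fun y => by simpa using h₂lin 0 0 y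
  have hb₁ : ∀ x : V₁, b • x = x := fun x => smul_eq_self_of_add_eq_one hab (ha x)
  have ha₂ : ∀ y : V₂, a • y = y := fun y => smul_eq_self_of_add_eq_one (add_comm a b ▸ hab) (hb y)
  refine ⟨⟨_, IsMetaboliser.comap hL (LinearMap.inl LC V₁ V₂) Prod.fst (fun _ => rfl)
      (fun x w => by simp [hl₂]) fun w hw => ?_⟩,
    ⟨_, IsMetaboliser.comap hL (LinearMap.inr LC V₁ V₂) Prod.snd (fun _ => rfl)
      (fun y w => by simp [hl₁]) fun w hw => ?_⟩⟩
  · convert L.smul_mem b hw using 1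
    exact Prod.ext (hb₁ w.1).symm (hb w.2).symm
  · convert L.smul_mem a hw using 1
    exact Prod.ext (ha w.1).symm (ha₂ w.2).symm

/-- Proposition 4.1(2): if `(V₁,λ₁)` and `(V₂,λ₂)` are nonsingular linking forms over
`Λ = ℂ[t^{±1}]` whose underlying modules have orders with distinct roots (no `ω ∈ ℂ` such
that both `V₁` and `V₂` contain a nonzero element annihilated by `t - ω`), and if the
orthogonal direct sum `(V₁ ⊕ V₂, λ₁ ⊕ λ₂)` is metabolic, then both `(V₁,λ₁)` and `(V₂,λ₂)`
are metabolic. -/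
theorem metabolic_sum_of_distinct_roots {V₁ V₂ : Type}
    [AddCommGroup V₁] [AddCommGroup V₂] [Module LC V₁] [Module LC V₂]
    -- finitely generated torsion modules
    [Module.Finite LC V₁] [Module.Finite LC V₂]
    (htor₁ : ∀ x : V₁, ∃ a : LC, a ≠ 0 ∧ a • x = 0)
    (htor₂ : ∀ x : V₂, ∃ a : LC, a ≠ 0 ∧ a • x = 0)
    -- the involution `#` on `Λ`, with `#(C a) = C (conj a)` and `#(t) = t⁻¹`, together with
    -- its extension to `ℂ(t)`
    (inv : LC →+* LC)
    (hinvC : ∀ a : ℂ, inv (LaurentPolynomial.C a) = LaurentPolynomial.C (starRingEnd ℂ a))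
    (hinvT : inv (LaurentPolynomial.T 1) = LaurentPolynomial.T (-1))
    (invQ : CtField →+* CtField)
    (hinvQ : ∀ a : LC, invQ (algebraMap LC CtField a) = algebraMap LC CtField (inv a))
    -- the linking forms
    (l₁ : V₁ → V₁ → QLC) (l₂ : V₂ → V₂ → QLC)
    -- biadditive, `Λ`-linear in the first variable, `#`-semilinear in the second variable
    (h₁add : ∀ x y z : V₁, l₁ (x + y) z = l₁ x z + l₁ y z)
    (h₁lin : ∀ (a : LC) (x y : V₁), l₁ (a • x) y = a • l₁ x y)
    (h₁add' : ∀ x y z : V₁, l₁ x (y + z) = l₁ x y + l₁ x z)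
    (h₁semi : ∀ (a : LC) (x y : V₁), l₁ x (a • y) = inv a • l₁ x y)
    (h₂add : ∀ x y z : V₂, l₂ (x + y) z = l₂ x z + l₂ y z)
    (h₂lin : ∀ (a : LC) (x y : V₂), l₂ (a • x) y = a • l₂ x y)
    (h₂add' : ∀ x y z : V₂, l₂ x (y + z) = l₂ x y + l₂ x z)
    (h₂semi : ∀ (a : LC) (x y : V₂), l₂ x (a • y) = inv a • l₂ x y)
    -- Hermitian: `λ(y,x) = #(λ(x,y))`, via representatives in `ℂ(t)`
    (h₁herm : ∀ x y : V₁, ∃ r : CtField,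
      (Submodule.Quotient.mk r : QLC) = l₁ x y ∧ (Submodule.Quotient.mk (invQ r) : QLC) = l₁ y x)
    (h₂herm : ∀ x y : V₂, ∃ r : CtField,
      (Submodule.Quotient.mk r : QLC) = l₂ x y ∧ (Submodule.Quotient.mk (invQ r) : QLC) = l₂ y x)
    -- nonsingular: the adjoint is a bijection onto the `#`-semilinear maps to `ℂ(t)/Λ`
    (h₁inj : ∀ x : V₁, (∀ y : V₁, l₁ x y = 0) → x = 0)
    (h₁surj : ∀ g : V₁ → QLC, (∀ y z : V₁, g (y + z) = g y + g z) →
      (∀ (a : LC) (y : V₁), g (a • y) = inv a • g y) → ∃ x : V₁, ∀ y : V₁, l₁ x y = g y)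
    (h₂inj : ∀ x : V₂, (∀ y : V₂, l₂ x y = 0) → x = 0)
    (h₂surj : ∀ g : V₂ → QLC, (∀ y z : V₂, g (y + z) = g y + g z) →
      (∀ (a : LC) (y : V₂), g (a • y) = inv a • g y) → ∃ x : V₂, ∀ y : V₂, l₂ x y = g y)
    -- the orders of `V₁` and `V₂` have distinct roots
    (hroots : ¬ ∃ ω : ℂ,
      (∃ x : V₁, x ≠ 0 ∧ (LaurentPolynomial.T 1 - LaurentPolynomial.C ω) • x = 0) ∧
      (∃ y : V₂, y ≠ 0 ∧ (LaurentPolynomial.T 1 - LaurentPolynomial.C ω) • y = 0))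
    -- the orthogonal direct sum `λ₁ ⊕ λ₂` is metabolic
    (hmet : ∃ L : Submodule LC (V₁ × V₂),
      ∀ z : V₁ × V₂, z ∈ L ↔ ∀ w ∈ L, l₁ z.1 w.1 + l₂ z.2 w.2 = 0) :
    (∃ L₁ : Submodule LC V₁, ∀ x : V₁, x ∈ L₁ ↔ ∀ y ∈ L₁, l₁ x y = 0) ∧
    (∃ L₂ : Submodule LC V₂, ∀ x : V₂, x ∈ L₂ ↔ ∀ y ∈ L₂, l₂ x y = 0) :=
  metabolic_sum_of_distinct_roots_general htor₁ htor₂ l₁ l₂ h₁lin h₂lin hroots hmet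
end

section
/- Let p ≥ 2, and let q₁, q₂ ≥ 2 be integers each coprime to p. If s and u are nonnegative integers with s ≠ u, then the polynomials Δ_{p,q₁}(X^{p^s}) and Δ_{p,q₂}(X^{p^u}) have no common root in ℂ. -/
open Polynomial

lemma nt_lemma (p q₁ q₂ m s u : ℕ) (hsu : s < u)
    (hpq₁ : Nat.Coprime p q₁)
    (h1 : m ∣ p ^ (s+1) * q₁) (h1' : m ∣ p ^ (u+1) * q₂)
    (h2 : ¬ m ∣ p ^ u * q₂) : False := by
  obtain ⟨a₁, b₁, ha₁, hb₁, hm₁⟩ := exists_dvd_and_dvd_of_dvd_mul h1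
  obtain ⟨a₂, b₂, ha₂, hb₂, hm₂⟩ := exists_dvd_and_dvd_of_dvd_mul h1'
  apply h2
  rw [hm₂]
  refine mul_dvd_mul ?_ hb₂
  have hcop : Nat.Coprime a₂ b₁ :=
    Nat.Coprime.coprime_dvd_left ha₂ (Nat.Coprime.coprime_dvd_right hb₁ (hpq₁.pow_left _))
  have ha₂m : a₂ ∣ a₁ * b₁ := hm₁ ▸ (hm₂ ▸ (Dvd.intro b₂ rfl) : a₂ ∣ m)
  exact ((hcop.dvd_of_dvd_mul_right ha₂m).trans ha₁).trans (pow_dvd_pow p (by omega))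

lemma alexander_root (p q : ℕ) (hp : 2 ≤ p) (hq : 2 ≤ q) (D : Polynomial ℂ)
    (hD : ((X : ℂ[X]) ^ p - 1) * ((X : ℂ[X]) ^ q - 1) * D
        = ((X : ℂ[X]) ^ (p * q) - 1) * ((X : ℂ[X]) - 1))
    (z : ℂ) (hz : D.IsRoot z) : z ^ (p * q) = 1 ∧ z ^ q ≠ 1 := by
  have hzD : D.eval z = 0 := hz
  have h0 := congrArg (eval z) hD
  simp [hzD] at h0
  have hpq1 : z ^ (p * q) = 1 := by
    rcases h0 with h | h
    · linear_combination h
    · have : z = 1 := by linear_combination h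
      simp [this]
  refine ⟨hpq1, ?_⟩
  intro hzq
  have hz0 : z ≠ 0 := by
    intro h
    rw [h, zero_pow (by positivity)] at hpq1
    exact zero_ne_one hpq1
  have hpq0 : (p : ℂ) * q ≠ 0 := by
    exact mul_ne_zero (Nat.cast_ne_zero.2 (by omega)) (Nat.cast_ne_zero.2 (by omega))
  have h1 := congrArg (eval z) (congrArg derivative hD)
  simp [derivative_mul, derivative_sub, derivative_X_pow, hzD, hzq] at h1
  rw [hpq1] at h1
  have hz1 : z = 1 := by
    have hne : (p : ℂ) * q * z ^ (p * q - 1) ≠ 0 := by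
      exact mul_ne_zero hpq0 (pow_ne_zero _ hz0)
    have : ((p : ℂ) * q * z ^ (p * q - 1)) * (z - 1) = 0 := by linear_combination -h1
    rcases mul_eq_zero.1 this with h | h
    · exact absurd h hne
    · linear_combination h
  subst hz1
  have h2 := congrArg (eval 1) (congrArg derivative (congrArg derivative hD))
  have hD1 : D.eval 1 = 0 := hzD
  simp [derivative_mul, derivative_sub, derivative_X_pow, hD1] at h2
  exact hpq0 (by linear_combination -h2 / 2)

/-- Proposition 5.2: let `p ≥ 2`, and let `q₁, q₂ ≥ 2` be coprime to `p`.  Let `Δ_{p,qᵢ}` be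
the Alexander polynomial of the torus knot `T(p,qᵢ)`, i.e. the polynomial `Dᵢ ∈ ℂ[X]` with
`(X^p - 1)(X^{qᵢ} - 1)·Dᵢ = (X^{p·qᵢ} - 1)(X - 1)`.  If `s ≠ u` are nonnegative integers,
then `Δ_{p,q₁}(X^{p^s})` and `Δ_{p,q₂}(X^{p^u})` have no common root in `ℂ`. -/
theorem torusAlexander_cables_no_common_root (p q₁ q₂ : ℕ)
    (hp : 2 ≤ p) (hq₁ : 2 ≤ q₁) (hq₂ : 2 ≤ q₂)
    (hpq₁ : Nat.Coprime p q₁) (hpq₂ : Nat.Coprime p q₂)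
    (s u : ℕ) (hsu : s ≠ u)
    (D₁ D₂ : Polynomial ℂ)
    (hD₁ : ((Polynomial.X : Polynomial ℂ) ^ p - 1) * ((Polynomial.X : Polynomial ℂ) ^ q₁ - 1)
        * D₁ = ((Polynomial.X : Polynomial ℂ) ^ (p * q₁) - 1) * ((Polynomial.X : Polynomial ℂ) - 1))
    (hD₂ : ((Polynomial.X : Polynomial ℂ) ^ p - 1) * ((Polynomial.X : Polynomial ℂ) ^ q₂ - 1)
        * D₂ = ((Polynomial.X : Polynomial ℂ) ^ (p * q₂) - 1) * ((Polynomial.X : Polynomial ℂ) - 1)) :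
    ¬ ∃ ω : ℂ, (D₁.comp ((Polynomial.X : Polynomial ℂ) ^ p ^ s)).IsRoot ω ∧
        (D₂.comp ((Polynomial.X : Polynomial ℂ) ^ p ^ u)).IsRoot ω := by
  rintro ⟨ω, h1, h2⟩
  have hz₁ : D₁.IsRoot (ω ^ p ^ s) := by
    simpa [IsRoot, eval_comp] using h1
  have hz₂ : D₂.IsRoot (ω ^ p ^ u) := by
    simpa [IsRoot, eval_comp] using h2
  obtain ⟨he₁, hn₁⟩ := alexander_root p q₁ hp hq₁ D₁ hD₁ _ hz₁
  obtain ⟨he₂, hn₂⟩ := alexander_root p q₂ hp hq₂ D₂ hD₂ _ hz₂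
  rw [← pow_mul] at he₁ he₂ hn₁ hn₂
  have hpe₁ : ω ^ (p ^ (s+1) * q₁) = 1 := by
    rw [show p ^ (s+1) * q₁ = p ^ s * (p * q₁) by ring]; exact he₁
  have hpe₂ : ω ^ (p ^ (u+1) * q₂) = 1 := by
    rw [show p ^ (u+1) * q₂ = p ^ u * (p * q₂) by ring]; exact he₂
  have hω : ω ≠ 0 := by
    intro h
    rw [h, zero_pow (by positivity)] at hpe₁
    exact zero_ne_one hpe₁
  set w : ℂˣ := Units.mk0 ω hω with hw
  have hiff : ∀ k : ℕ, w ^ k = 1 ↔ ω ^ k = 1 := by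
    intro k
    rw [Units.ext_iff, Units.val_pow_eq_pow_val, hw, Units.val_one, Units.val_mk0]
  have hm1 : orderOf w ∣ p ^ (s+1) * q₁ := orderOf_dvd_iff_pow_eq_one.2 ((hiff _).2 hpe₁)
  have hm2 : orderOf w ∣ p ^ (u+1) * q₂ := orderOf_dvd_iff_pow_eq_one.2 ((hiff _).2 hpe₂)
  have hm3 : ¬ orderOf w ∣ p ^ s * q₁ := fun h =>
    hn₁ ((hiff _).1 (orderOf_dvd_iff_pow_eq_one.1 h))
  have hm4 : ¬ orderOf w ∣ p ^ u * q₂ := fun h =>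
    hn₂ ((hiff _).1 (orderOf_dvd_iff_pow_eq_one.1 h))
  rcases hsu.lt_or_gt with h | h
  · exact nt_lemma p q₁ q₂ (orderOf w) s u h hpq₁ hm1 hm2 hm4
  · exact nt_lemma p q₂ q₁ (orderOf w) u s h hpq₂ hm2 hm1 hm3
end
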